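/- For 0 < α < 1, the coefficients of the power series of h(x) = 2^(-α)((1+x)^α - (1-x²)^α) are all nonnegative and sum to 1 (i.e., h defines a probability distribution on the positive integers, since h(1) = 2^(-α)·2^α = 1). -/

import Mathlib

/-!
For `0 < α < 1` the sign of `C(α, k)` is `(-1)^(k-1)` for `k ≥ 1`, and
`|C(α, k+1)| = |C(α, k)| · (k - α)/(k + 1)` decreases in `k`. So the odd coefficients
`2^(-α) C(α, 2r+1)` are positive and the even ones `2^(-α) (|C(α, n)| - |C(α, 2n)|)` are
nonnegative. By the binomial series, `∑ hcoeff α m x^m = h(x)` for `|x| < 1`; a power series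
with nonnegative coefficients sums at `1` to the limit of its sum as `x → 1⁻`, here
`h(1) = 2^(-α) 2^α = 1`.
-/

open Finset Filter Set Topology

/-- Generalized binomial coefficient C(α, n) = α(α-1)⋯(α-n+1)/n! for real α. -/
noncomputable def genBinom (α : ℝ) (n : ℕ) : ℝ :=
  (∏ i ∈ Finset.range n, (α - i)) / n.factorial
/-- Coefficients of h(x) = 2^{-α}((1+x)^α - (1-x²)^α). -/
noncomputable def hcoeff (α : ℝ) (m : ℕ) : ℝ :=
  (2 : ℝ) ^ (-α) *
    (if m = 0 then 0
     else if m % 2 = 1 then genBinom α m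
     else genBinom α m - (-1 : ℝ) ^ (m / 2) * genBinom α (m / 2))

theorem genBinom_succ (α : ℝ) (n : ℕ) :
    genBinom α (n + 1) = genBinom α n * (α - n) / (n + 1) := by
  rw [genBinom, genBinom, prod_range_succ, Nat.factorial_succ, Nat.cast_mul, Nat.cast_succ]
  field_simp

theorem genBinom_eq_choose (α : ℝ) (n : ℕ) : genBinom α n = Ring.choose α n := by
  rw [Ring.choose_eq_smul, ← Polynomial.aeval_eq_smeval, Polynomial.aeval_def,
    ← Polynomial.eval_map, descPochhammer_map, descPochhammer_eval_eq_prod_range, genBinom,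
    smul_eq_mul, div_eq_inv_mul]

theorem hasSum_genBinom_mul_pow (α : ℝ) {x : ℝ} (hx : |x| < 1) :
    HasSum (fun n => genBinom α n * x ^ n) ((1 + x) ^ α) := by
  have := (Real.one_add_rpow_hasFPowerSeriesOnBall_zero (a := α)).hasSum (y := x)
    (by simpa [Metric.mem_eball, edist_dist] using hx)
  simpa [genBinom_eq_choose, binomialSeries, mul_comm] using this

theorem neg_one_pow_mul_genBinom_succ_succ (α : ℝ) (n : ℕ) :
    (-1) ^ (n + 1) * genBinom α (n + 2) =
      (-1) ^ n * genBinom α (n + 1) * ((n + 1 - α) / (n + 2)) := by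
  rw [genBinom_succ α (n + 1)]
  push_cast
  ring

theorem neg_one_pow_mul_genBinom_succ_pos {α : ℝ} (hα0 : 0 < α) (hα1 : α < 1) (n : ℕ) :
    0 < (-1) ^ n * genBinom α (n + 1) := by
  induction n with
  | zero => simpa [genBinom]
  | succ n ih =>
    rw [neg_one_pow_mul_genBinom_succ_succ]
    have : α < n + 1 := by linarith [(n.cast_nonneg : (0 : ℝ) ≤ n)]
    exact mul_pos ih (div_pos (by linarith) (by positivity))

theorem antitone_neg_one_pow_mul_genBinom_succ {α : ℝ} (hα0 : 0 < α) (hα1 : α < 1) :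
    Antitone fun n : ℕ => (-1) ^ n * genBinom α (n + 1) := by
  refine antitone_nat_of_succ_le fun n => ?_
  rw [neg_one_pow_mul_genBinom_succ_succ]
  refine mul_le_of_le_one_right (neg_one_pow_mul_genBinom_succ_pos hα0 hα1 n).le ?_
  rw [div_le_one (by positivity)]
  linarith

theorem hcoeff_nonneg {α : ℝ} (hα0 : 0 < α) (hα1 : α < 1) (m : ℕ) : 0 ≤ hcoeff α m := by
  refine mul_nonneg (Real.rpow_nonneg zero_le_two _) ?_
  obtain ⟨k, rfl | rfl⟩ := Nat.even_or_odd' m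
  · rcases k with _ | n
    · simp
    -- `|C(α, 2n+2)| ≤ |C(α, n+1)|` and the two signs are opposite
    have hle : (-1) ^ (2 * n + 1) * genBinom α (2 * n + 1 + 1) ≤ (-1) ^ n * genBinom α (n + 1) :=
      antitone_neg_one_pow_mul_genBinom_succ hα0 hα1 (show n ≤ 2 * n + 1 by omega)
    rw [Odd.neg_one_pow ⟨n, rfl⟩] at hle
    rw [if_neg (by omega), if_neg (by omega), show 2 * (n + 1) / 2 = n + 1 by omega, pow_succ,
      show 2 * (n + 1) = 2 * n + 1 + 1 by omega]
    linarith
  · rw [if_neg (by omega), if_pos (by omega)]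
    simpa [pow_mul] using (neg_one_pow_mul_genBinom_succ_pos hα0 hα1 (2 * k)).le

theorem hasSum_of_nonneg_of_tendsto_powerSeries {a : ℕ → ℝ} {f : ℝ → ℝ} {l : ℝ}
    (ha : ∀ n, 0 ≤ a n) (hf : ∀ x ∈ Ioo (0 : ℝ) 1, HasSum (fun n => a n * x ^ n) (f x))
    (hl : Tendsto f (𝓝[<] 1) (𝓝 l)) : HasSum a l := by
  have hf' : ∀ᶠ x in 𝓝[<] (1 : ℝ), x ∈ Ioo (0 : ℝ) 1 := Ioo_mem_nhdsLT zero_lt_one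
  have hpartial : ∀ N, ∑ n ∈ range N, a n ≤ l := by
    intro N
    have hcont : Continuous fun x : ℝ => ∑ n ∈ range N, a n * x ^ n := by fun_prop
    have hpoly : Tendsto (fun x : ℝ => ∑ n ∈ range N, a n * x ^ n) (𝓝[<] 1)
        (𝓝 (∑ n ∈ range N, a n)) := by
      simpa using (hcont.tendsto 1).mono_left nhdsWithin_le_nhds
    refine le_of_tendsto_of_tendsto hpoly hl (hf'.mono fun x hx => ?_)
    exact sum_le_hasSum _ (fun n _ => mul_nonneg (ha n) (pow_nonneg hx.1.le n)) (hf x hx)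
  have hsum : Summable a := summable_of_sum_range_le ha hpartial
  have hle : l ≤ ∑' n, a n := le_of_tendsto hl <| hf'.mono fun x hx =>
    hasSum_le (fun n => mul_le_of_le_one_right (ha n) (pow_le_one₀ hx.1.le hx.2.le)) (hf x hx)
      hsum.hasSum
  exact le_antisymm (Real.tsum_le_of_sum_range_le ha hpartial) hle ▸ hsum.hasSum

theorem hasSum_one_sub_sq_rpow (α : ℝ) {x : ℝ} (hx : |x| < 1) :
    HasSum (fun m => if m % 2 = 1 then 0 else (-1) ^ (m / 2) * genBinom α (m / 2) * x ^ m)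
      ((1 - x ^ 2) ^ α) := by
  have hx2 : |-x ^ 2| < 1 := by
    rw [abs_neg, abs_pow]
    exact pow_lt_one₀ (abs_nonneg x) hx two_ne_zero
  have hsq := hasSum_genBinom_mul_pow α hx2
  rw [← sub_eq_add_neg] at hsq
  refine ((mul_right_injective₀ two_ne_zero).hasSum_iff fun m hm => ?_).mp ?_
  · rw [if_pos (by by_contra h; exact hm ⟨m / 2, show 2 * (m / 2) = m by omega⟩)]
  · convert hsq using 1
    funext n
    simp only [Function.comp_apply, Nat.mul_mod_right, zero_ne_one, if_false,
      Nat.mul_div_cancel_left n two_pos]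
    rw [neg_pow, pow_mul]
    ring

theorem hasSum_hcoeff_mul_pow (α : ℝ) {x : ℝ} (hx : |x| < 1) :
    HasSum (fun m => hcoeff α m * x ^ m) (2 ^ (-α) * ((1 + x) ^ α - (1 - x ^ 2) ^ α)) := by
  refine (((hasSum_genBinom_mul_pow α hx).sub
    (hasSum_one_sub_sq_rpow α hx)).mul_left (2 ^ (-α))).congr_fun fun m => ?_
  rcases m with _ | m
  · simp [hcoeff, genBinom]
  · simp only [hcoeff, Nat.succ_ne_zero, if_false]
    split_ifs <;> ring

theorem stmt_13 (α : ℝ) (hα0 : 0 < α) (hα1 : α < 1) :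
    (∀ m : ℕ, 0 ≤ hcoeff α m) ∧ HasSum (fun m : ℕ => hcoeff α m) 1 := by
  refine ⟨hcoeff_nonneg hα0 hα1, hasSum_of_nonneg_of_tendsto_powerSeries
    (hcoeff_nonneg hα0 hα1) (fun x hx => hasSum_hcoeff_mul_pow α ?_) ?_⟩
  · exact abs_lt.2 ⟨by linarith [hx.1], hx.2⟩
  have hcont : Continuous fun x : ℝ => (2 : ℝ) ^ (-α) * ((1 + x) ^ α - (1 - x ^ 2) ^ α) := by
    fun_prop (disch := exact hα0.le)
  have hval : (2 : ℝ) ^ (-α) * ((1 + 1) ^ α - (1 - 1 ^ 2) ^ α) = 1 := by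
    norm_num [Real.zero_rpow hα0.ne', ← Real.rpow_add]
  have hlim := (hcont.tendsto 1).mono_left (nhdsWithin_le_nhds (s := Iio 1))
  rwa [hval] at hlim
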